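/- arXiv:2507.21956 — 2 statements merged into one kernel-verified Lean document; each statement's English description precedes it below -/
import Mathlib

section
/- The detection threshold ζ* = min(σ̃²/ρ + ℵ, ρσ̃²) minimizes the detection error probability P_DEP(ζ) = 1 - (1/(2 ln ρ))·(ln(min(ζ, ρσ̃²)) - ln(max(ζ - ℵ, σ̃²/ρ))) over all ζ ∈ (σ̃²/ρ, ρσ̃²]. -/
open Real Set

/-- `x ↦ x / (x - c)` is antitone on `(c, ∞)`, so `log x - log (x - c)` is largest at the left
end `x = a + c` of the range where the `max` in the detection error is attained by `x - c`. -/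
lemma log_sub_log_sub_le_of_add_le {a c x : ℝ} (ha : 0 < a) (hc : 0 ≤ c) (hx : a + c ≤ x) :
    log x - log (x - c) ≤ log (a + c) - log a := by
  have hxc : 0 < x - c := by linarith
  rw [← log_div (by linarith) hxc.ne', ← log_div (by linarith) ha.ne']
  refine log_le_log (div_pos (by linarith) hxc) ?_
  rw [div_le_div_iff₀ hxc ha]
  nlinarith

lemma log_min_sub_log_max_le {a b c ζ : ℝ} (ha : 0 < a) (hc : 0 ≤ c) (haζ : a < ζ)
    (hζb : ζ ≤ b) :
    log (min ζ b) - log (max (ζ - c) a) ≤ log (min (a + c) b) - log a := by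
  rw [min_eq_left hζb]
  rcases le_or_gt ζ (a + c) with hζ | hζ
  · rw [max_eq_right (by linarith)]
    gcongr
    · linarith
    · exact le_min hζ hζb
  · rw [max_eq_left (by linarith), min_eq_left (by linarith)]
    exact log_sub_log_sub_le_of_add_le ha hc hζ.le

/-- The detection threshold `ζ* = min(σn/ρ + ℵ, ρσn)` minimizes the detection error
probability `P_DEP(ζ) = 1 - (1/(2 ln ρ))(ln(min(ζ, ρσn)) - ln(max(ζ-ℵ, σn/ρ)))`
over all `ζ ∈ (σn/ρ, ρσn]`. -/
theorem optimal_detection_threshold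
    (ρ σn ℵ : ℝ) (hρ : 1 < ρ) (hσ : 0 < σn) (hℵ : 0 < ℵ) :
    ∀ ζ ∈ Set.Ioc (σn / ρ) (ρ * σn),
      1 - (1 / (2 * Real.log ρ)) *
          (Real.log (min (min (σn / ρ + ℵ) (ρ * σn)) (ρ * σn)) -
            Real.log (max (min (σn / ρ + ℵ) (ρ * σn) - ℵ) (σn / ρ)))
        ≤ 1 - (1 / (2 * Real.log ρ)) *
          (Real.log (min ζ (ρ * σn)) - Real.log (max (ζ - ℵ) (σn / ρ))) := by
  rintro ζ ⟨hζ_gt, hζ_le⟩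
  have hmin : min (min (σn / ρ + ℵ) (ρ * σn)) (ρ * σn) = min (σn / ρ + ℵ) (ρ * σn) := by
    rw [min_assoc, min_self]
  have hmax : max (min (σn / ρ + ℵ) (ρ * σn) - ℵ) (σn / ρ) = σn / ρ :=
    max_eq_right (by linarith [min_le_left (σn / ρ + ℵ) (ρ * σn)])
  have hweight : 0 ≤ 1 / (2 * log ρ) := by
    have := log_pos hρ
    positivity
  rw [hmin, hmax]
  have hgap := log_min_sub_log_max_le (by positivity) hℵ.le hζ_gt hζ_le
  exact sub_le_sub_left (mul_le_mul_of_nonneg_left hgap hweight) 1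
end

section
/- If the leakage power satisfies ℵ < σ̃²(ρ - 1/ρ), then the minimum detection error probability equals P_DEP^min = 1 - (1/(2 ln ρ))·ln(1 + ρℵ/σ̃²), and this value is strictly positive; if ℵ ≥ σ̃²(ρ - 1/ρ), then substituting the optimal threshold ζ* = ρσ̃² yields P_DEP^min = 0. -/
/-!
Below the critical leakage `σ(ρ - 1/ρ)` the optimal threshold is `ζ* = σ/ρ + ℵ`, where the
two logarithms differ by `log (1 + ρℵ/σ)`; this stays below `log ρ² = 2 log ρ` exactly because
`1 + ρℵ/σ < ρ²` is a rewriting of `ℵ < σ(ρ - 1/ρ)`. Above it, `ζ* = ρσ` and the clipped interval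
`[σ/ρ, ρσ]` is the full uncertainty range, whose log-length is `2 log ρ`, so the error vanishes.
-/

open Real

/-- False-alarm plus missed-detection probability at threshold `ζ`, for a noise power
log-uniform on `[σ/ρ, ρσ]` to which the covert signal adds `ℵ`. -/
noncomputable def detectionErrorProb (ρ σ ℵ ζ : ℝ) : ℝ :=
  1 - 1 / (2 * log ρ) * (log (min ζ (ρ * σ)) - log (max (ζ - ℵ) (σ / ρ)))

lemma mul_sub_one_div_eq {K : Type*} [Field K] {ρ : K} (hρ : ρ ≠ 0) (σ : K) :
    σ * (ρ - 1 / ρ) = ρ * σ - σ / ρ := by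
  field_simp

section

variable {ρ σ ℵ : ℝ}

lemma one_add_mul_div_lt_sq (hρ : 0 < ρ) (hσ : 0 < σ) (h : ℵ < σ * (ρ - 1 / ρ)) :
    1 + ρ * ℵ / σ < ρ ^ 2 := by
  rw [mul_sub_one_div_eq hρ.ne'] at h
  have hprod : ρ * ℵ < (ρ ^ 2 - 1) * σ :=
    calc ρ * ℵ < ρ * (ρ * σ - σ / ρ) := by gcongr
      _ = (ρ ^ 2 - 1) * σ := by field_simp
  linarith [(div_lt_iff₀ hσ).2 hprod]

lemma one_sub_div_two_log_mul_log_pos (hρ : 1 < ρ) {x : ℝ} (hx : 0 < x) (hxρ : x < ρ ^ 2) :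
    0 < 1 - 1 / (2 * log ρ) * log x := by
  have hlogρ : 0 < 2 * log ρ := by have := log_pos hρ; positivity
  have hlogx : log x < 2 * log ρ := by
    simpa [log_pow] using log_lt_log hx hxρ
  rwa [one_div_mul_eq_div, sub_pos, div_lt_one hlogρ]

lemma detectionErrorProb_add_leakage (hρ : 0 < ρ) (hσ : 0 < σ) (hℵ : 0 ≤ ℵ)
    (h : σ / ρ + ℵ ≤ ρ * σ) :
    detectionErrorProb ρ σ ℵ (σ / ρ + ℵ) = 1 - 1 / (2 * log ρ) * log (1 + ρ * ℵ / σ) := by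
  have hratio : (σ / ρ + ℵ) / (σ / ρ) = 1 + ρ * ℵ / σ := by field_simp
  have hlow : 0 < σ / ρ := by positivity
  rw [detectionErrorProb, min_eq_left h, add_sub_cancel_right, max_self,
    ← log_div (by positivity) hlow.ne', hratio]

lemma detectionErrorProb_mul_eq_zero (hρ : 1 < ρ) (hσ : 0 < σ) (h : ρ * σ - ℵ ≤ σ / ρ) :
    detectionErrorProb ρ σ ℵ (ρ * σ) = 0 := by
  have hρ0 : 0 < ρ := one_pos.trans hρ
  have hlogρ : log ρ ≠ 0 := (log_pos hρ).ne'
  have hwidth : log (ρ * σ) - log (σ / ρ) = 2 * log ρ := by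
    rw [log_mul hρ0.ne' hσ.ne', log_div hσ.ne' hρ0.ne']
    ring
  rw [detectionErrorProb, min_self, max_eq_right h, hwidth]
  field_simp
  ring

end

/-- Substituting the optimal threshold `ζ* = min(σn/ρ + ℵ, ρσn)` into the DEP:
if `ℵ < σn(ρ - 1/ρ)` then `P_DEP^min = 1 - (1/(2 ln ρ)) ln(1 + ρℵ/σn)`, which is
strictly positive; if `ℵ ≥ σn(ρ - 1/ρ)` then `P_DEP^min = 0`. -/
theorem minimum_DEP
    (ρ σn ℵ : ℝ) (hρ : 1 < ρ) (hσ : 0 < σn) (hℵ : 0 ≤ ℵ) :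
    (ℵ < σn * (ρ - 1 / ρ) →
      (1 - (1 / (2 * Real.log ρ)) *
          (Real.log (min (min (σn / ρ + ℵ) (ρ * σn)) (ρ * σn)) -
            Real.log (max (min (σn / ρ + ℵ) (ρ * σn) - ℵ) (σn / ρ)))
        = 1 - (1 / (2 * Real.log ρ)) * Real.log (1 + ρ * ℵ / σn)) ∧
      0 < 1 - (1 / (2 * Real.log ρ)) * Real.log (1 + ρ * ℵ / σn)) ∧
    (σn * (ρ - 1 / ρ) ≤ ℵ →
      1 - (1 / (2 * Real.log ρ)) *
          (Real.log (min (ρ * σn) (ρ * σn)) -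
            Real.log (max (ρ * σn - ℵ) (σn / ρ))) = 0) := by
  have hρ0 : 0 < ρ := one_pos.trans hρ
  have hgap := mul_sub_one_div_eq hρ0.ne' σn
  refine ⟨fun h => ⟨?_, ?_⟩, fun h => detectionErrorProb_mul_eq_zero hρ hσ (by linarith)⟩
  · have hζ : σn / ρ + ℵ ≤ ρ * σn := by linarith
    rw [min_eq_left hζ]
    exact detectionErrorProb_add_leakage hρ0 hσ hℵ hζ
  · exact one_sub_div_two_log_mul_log_pos hρ (by positivity) (one_add_mul_div_lt_sq hρ0 hσ h)
end
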